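/- arXiv:1702.02534 — 8 statements merged into one kernel-verified Lean document; each statement's English description precedes it below -/
import Mathlib

section
/- In the discrete upwind setting, for every time step δ > 0 and all data ρⁿ = (ρⁿ_K)_{K∈𝒯} ∈ ℝ^𝒯 and fⁿ = (fⁿ_K)_{K∈𝒯} ∈ ℝ^𝒯 there exists a unique vector ρⁿ⁺¹ = (ρⁿ⁺¹_K)_{K∈𝒯} ∈ ℝ^𝒯 solving one step of the implicit upwind scheme. (The underlying linear system, after multiplication by the volumes |K|, is strictly diagonally dominant by columns and hence invertible.) -/
open Finset

/-! Multiplying the equation of cell `K` by `|K|` turns the scheme into a linear system `M ρⁿ⁺¹ = b`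
whose diagonal entry `|K|/δ + Σ_L |K∣L| u⁺_{KL}` exceeds, by `|K|/δ > 0`, the sum of the off-diagonal
entries `|L∣K| u⁻_{LK} = |K∣L| u⁺_{KL}` of its column. A strictly column diagonally dominant
matrix is invertible, so the system has exactly one solution. -/

namespace Upwind

open Matrix

variable {ι : Type*} [Fintype ι] [DecidableEq ι]

/-- The implicit upwind system, with the equation of each cell `K` multiplied by `vol K`. -/
noncomputable def matrix (vol : ι → ℝ) (edge u : ι → ι → ℝ) (δ : ℝ) : Matrix ι ι ℝ := fun K L =>
  if K = L then vol K / δ + ∑ L' ∈ univ.erase K, edge K L' * max (u K L') 0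
  else -(edge K L * max (-u K L) 0)

theorem matrix_mulVec_apply (vol : ι → ℝ) (edge u : ι → ι → ℝ) (δ : ℝ) (x : ι → ℝ) (K : ι) :
    (matrix vol edge u δ *ᵥ x) K = vol K / δ * x K +
      ∑ L ∈ univ.erase K, edge K L * (max (u K L) 0 * x K - max (-u K L) 0 * x L) := by
  rw [mulVec, dotProduct, ← add_sum_erase _ _ (mem_univ K)]
  have off_diag : ∀ L ∈ univ.erase K, matrix vol edge u δ K L * x L =
      -(edge K L * max (-u K L) 0) * x L := fun L hL => by
    simp [matrix, (ne_of_mem_erase hL).symm]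
  rw [sum_congr rfl off_diag, matrix, if_pos rfl]
  simp only [mul_sub, sum_sub_distrib, add_mul, sum_mul, neg_mul, sum_neg_distrib, mul_assoc]
  ring

theorem sum_norm_matrix_lt_diag {vol : ι → ℝ} (hvol : ∀ K, 0 < vol K)
    {edge : ι → ι → ℝ} (hedge_symm : ∀ K L, edge K L = edge L K)
    (hedge_nonneg : ∀ K L, 0 ≤ edge K L)
    {u : ι → ι → ℝ} (hu_antisymm : ∀ K L, u K L = -u L K) {δ : ℝ} (hδ : 0 < δ) (L : ι) :
    ∑ K ∈ univ.erase L, ‖matrix vol edge u δ K L‖ < ‖matrix vol edge u δ L L‖ := by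
  have outflow_nonneg : 0 ≤ ∑ K ∈ univ.erase L, edge L K * max (u L K) 0 :=
    sum_nonneg fun K _ => mul_nonneg (hedge_nonneg L K) (le_max_right _ _)
  have column_eq_outflow : ∑ K ∈ univ.erase L, ‖matrix vol edge u δ K L‖ =
      ∑ K ∈ univ.erase L, edge L K * max (u L K) 0 := by
    refine sum_congr rfl fun K hK => ?_
    rw [matrix, if_neg (ne_of_mem_erase hK), norm_neg, Real.norm_of_nonneg
      (mul_nonneg (hedge_nonneg K L) (le_max_right _ _)), hedge_symm, hu_antisymm, neg_neg]
  have mass_pos : 0 < vol L / δ := div_pos (hvol L) hδ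
  rw [column_eq_outflow, matrix, if_pos rfl, Real.norm_of_nonneg (by linarith)]
  linarith

theorem isUnit_matrix {vol : ι → ℝ} (hvol : ∀ K, 0 < vol K)
    {edge : ι → ι → ℝ} (hedge_symm : ∀ K L, edge K L = edge L K)
    (hedge_nonneg : ∀ K L, 0 ≤ edge K L)
    {u : ι → ι → ℝ} (hu_antisymm : ∀ K L, u K L = -u L K) {δ : ℝ} (hδ : 0 < δ) :
    IsUnit (matrix vol edge u δ) :=
  (Matrix.isUnit_iff_isUnit_det _).mpr <| isUnit_iff_ne_zero.mpr <|
    det_ne_zero_of_sum_col_lt_diag <|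
      sum_norm_matrix_lt_diag hvol hedge_symm hedge_nonneg hu_antisymm hδ

theorem scheme_iff_matrix_mulVec {vol : ι → ℝ} (hvol : ∀ K, vol K ≠ 0) (edge u : ι → ι → ℝ)
    (δ : ℝ) (ρ f x : ι → ℝ) :
    (∀ K, (x K - ρ K) / δ +
        ∑ L ∈ univ.erase K, edge K L / vol K *
          (max (u K L) 0 * x K - max (-u K L) 0 * x L) = f K) ↔
      matrix vol edge u δ *ᵥ x = fun K => vol K * f K + vol K * ρ K / δ := by
  rw [funext_iff]
  refine forall_congr' fun K => ?_
  rw [matrix_mulVec_apply, ← (mul_right_injective₀ (hvol K)).eq_iff, mul_add, mul_sum]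
  simp only [← mul_assoc, mul_div_cancel₀ _ (hvol K)]
  have time_term : vol K * ((x K - ρ K) / δ) = vol K / δ * x K - vol K * ρ K / δ := by ring
  rw [time_term]
  constructor <;> intro h <;> linarith

end Upwind

theorem upwind_step_existsUnique_general {ι : Type*} [Fintype ι] [DecidableEq ι]
    (vol : ι → ℝ) (hvol : ∀ K, 0 < vol K)
    (edge : ι → ι → ℝ) (hedge_symm : ∀ K L, edge K L = edge L K)
    (hedge_nonneg : ∀ K L, 0 ≤ edge K L)
    (u : ι → ι → ℝ) (hu_antisymm : ∀ K L, u K L = - u L K)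
    (δ : ℝ) (hδ : 0 < δ) (ρ f : ι → ℝ) :
    ∃! ρ' : ι → ℝ, ∀ K : ι,
      (ρ' K - ρ K) / δ +
        ∑ L ∈ univ.erase K, edge K L / vol K *
          (max (u K L) 0 * ρ' K - max (-u K L) 0 * ρ' L) = f K := by
  have hM := Upwind.isUnit_matrix hvol hedge_symm hedge_nonneg hu_antisymm hδ
  have hbij : Function.Bijective (Upwind.matrix vol edge u δ).mulVec :=
    ⟨Matrix.mulVec_injective_iff_isUnit.mpr hM, Matrix.mulVec_surjective_iff_isUnit.mpr hM⟩
  rw [existsUnique_congr (Upwind.scheme_iff_matrix_mulVec (fun K => (hvol K).ne') edge u δ ρ f)]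
  exact hbij.existsUnique _

/-- **Existence and uniqueness for one step of the implicit upwind scheme.**
In the discrete upwind setting (finite nonempty cell set `ι`, positive volumes `vol`,
symmetric nonnegative edge areas `edge`, antisymmetric fluxes `u` vanishing on
non-adjacent cells), for every time step `δ > 0` and all data `ρ`, `f` there exists a
unique vector `ρ'` solving one step of the implicit upwind scheme. -/
theorem upwind_step_existsUnique {ι : Type*} [Fintype ι] [Nonempty ι] [DecidableEq ι]
    (vol : ι → ℝ) (hvol : ∀ K, 0 < vol K)
    (edge : ι → ι → ℝ) (hedge_symm : ∀ K L, edge K L = edge L K)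
    (hedge_nonneg : ∀ K L, 0 ≤ edge K L)
    (u : ι → ι → ℝ) (hu_antisymm : ∀ K L, u K L = - u L K)
    (hu_edge : ∀ K L, edge K L = 0 → u K L = 0)
    (δ : ℝ) (hδ : 0 < δ) (ρ f : ι → ℝ) :
    ∃! ρ' : ι → ℝ, ∀ K : ι,
      (ρ' K - ρ K) / δ +
        ∑ L ∈ univ.erase K, edge K L / vol K *
          (max (u K L) 0 * ρ' K - max (-u K L) 0 * ρ' L) = f K :=
  upwind_step_existsUnique_general vol hvol edge hedge_symm hedge_nonneg u hu_antisymm δ hδ ρ f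
end

section
/- In the discrete upwind setting, the implicit upwind scheme is monotone: if ρⁿ_K ≥ 0 and fⁿ_K ≥ 0 for all K ∈ 𝒯, and ρⁿ⁺¹ solves one step of the implicit upwind scheme with data ρⁿ, fⁿ and time step δ > 0, then ρⁿ⁺¹_K ≥ 0 for all K ∈ 𝒯. -/
open Finset

/-- **Monotonicity of the implicit upwind scheme.**
If the data `ρ` and `f` are nonnegative and `ρ'` solves one step of the implicit
upwind scheme with time step `δ > 0`, then `ρ'` is nonnegative. -/
theorem upwind_step_monotone {ι : Type*} [Fintype ι] [Nonempty ι] [DecidableEq ι]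
    (vol : ι → ℝ) (hvol : ∀ K, 0 < vol K)
    (edge : ι → ι → ℝ) (hedge_symm : ∀ K L, edge K L = edge L K)
    (hedge_nonneg : ∀ K L, 0 ≤ edge K L)
    (u : ι → ι → ℝ) (hu_antisymm : ∀ K L, u K L = - u L K)
    (hu_edge : ∀ K L, edge K L = 0 → u K L = 0)
    (δ : ℝ) (hδ : 0 < δ) (ρ f ρ' : ι → ℝ)
    (hρ : ∀ K, 0 ≤ ρ K) (hf : ∀ K, 0 ≤ f K)
    (hstep : ∀ K : ι,
      (ρ' K - ρ K) / δ +
        ∑ L ∈ univ.erase K, edge K L / vol K *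
          (max (u K L) 0 * ρ' K - max (-u K L) 0 * ρ' L) = f K) :
    ∀ K, 0 ≤ ρ' K := by
  intro K₀
  by_contra hneg
  push_neg at hneg
  classical
  set S : Finset ι := univ.filter (fun K => ρ' K < 0) with hS
  have hK₀S : K₀ ∈ S := by simp [hS, hneg]
  have hSmem : ∀ K, K ∈ S → ρ' K < 0 := by
    intro K hK; simpa [hS] using hK
  set a : ι → ι → ℝ := fun K L => edge K L * (max (u K L) 0 * ρ' K) with ha
  set b : ι → ι → ℝ := fun K L => edge K L * (max (u L K) 0 * ρ' L) with hb
  -- the scheme multiplied by vol K, with the sum extended to all of univ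
  have key : ∀ K, vol K * ((ρ' K - ρ K) / δ) +
      ∑ L ∈ univ, (a K L - b K L) = vol K * f K := by
    intro K
    have hvK : vol K ≠ 0 := (hvol K).ne'
    have h0 := hstep K
    have h1 : ∀ L ∈ univ.erase K,
        edge K L / vol K * (max (u K L) 0 * ρ' K - max (-u K L) 0 * ρ' L)
        = (a K L - b K L) / vol K := by
      intro L _
      have hu' : -u K L = u L K := by rw [hu_antisymm K L]; ring
      rw [hu', ha, hb]
      ring
    rw [Finset.sum_congr rfl h1] at h0
    have h2 : (a K K - b K K) / vol K = 0 := by simp [ha, hb]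
    rw [Finset.sum_erase (f := fun L => (a K L - b K L) / vol K) univ h2,
      ← Finset.sum_div] at h0
    have h3 := congrArg (fun x => vol K * x) h0
    simp only [mul_add] at h3
    have h4 : vol K * ((∑ i : ι, (a K i - b K i)) / vol K)
        = ∑ i : ι, (a K i - b K i) := by field_simp
    rw [h4] at h3
    exact h3
  have hsum := Finset.sum_congr rfl (fun K (_ : K ∈ S) => key K)
  rw [Finset.sum_add_distrib] at hsum
  -- the total flux out of S is nonpositive
  have hT : ∑ K ∈ S, ∑ L ∈ univ, (a K L - b K L) ≤ 0 := by
    have hsplit : ∀ K, ∑ L ∈ univ, (a K L - b K L)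
        = ∑ L ∈ S, (a K L - b K L) +
          ∑ L ∈ univ.filter (fun L => ¬ ρ' L < 0), (a K L - b K L) := by
      intro K
      rw [hS, ← Finset.sum_filter_add_sum_filter_not univ (fun L => ρ' L < 0)]
    rw [Finset.sum_congr rfl (fun K _ => hsplit K), Finset.sum_add_distrib]
    have hcancel : ∑ K ∈ S, ∑ L ∈ S, (a K L - b K L) = 0 := by
      have hba : ∑ K ∈ S, ∑ L ∈ S, b K L = ∑ K ∈ S, ∑ L ∈ S, a K L := by
        calc ∑ K ∈ S, ∑ L ∈ S, b K L = ∑ K ∈ S, ∑ L ∈ S, a L K := by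
              refine Finset.sum_congr rfl fun K _ => Finset.sum_congr rfl fun L _ => ?_
              show edge K L * (max (u L K) 0 * ρ' L) = edge L K * (max (u L K) 0 * ρ' L)
              rw [hedge_symm K L]
          _ = ∑ L ∈ S, ∑ K ∈ S, a L K := Finset.sum_comm
      simp [Finset.sum_sub_distrib, hba]
    have hbdry : ∑ K ∈ S, ∑ L ∈ univ.filter (fun L => ¬ ρ' L < 0), (a K L - b K L) ≤ 0 := by
      apply Finset.sum_nonpos
      intro K hK
      apply Finset.sum_nonpos
      intro L hL
      have hρK : ρ' K < 0 := hSmem K hK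
      have hρL : 0 ≤ ρ' L := by
        have := Finset.mem_filter.mp hL
        exact not_lt.mp this.2
      have hA : a K L ≤ 0 :=
        mul_nonpos_of_nonneg_of_nonpos (hedge_nonneg K L)
          (mul_nonpos_of_nonneg_of_nonpos (le_max_right _ _) hρK.le)
      have hB : 0 ≤ b K L :=
        mul_nonneg (hedge_nonneg K L) (mul_nonneg (le_max_right _ _) hρL)
      linarith
    linarith [hcancel, hbdry]
  have hA : ∑ K ∈ S, vol K * ((ρ' K - ρ K) / δ) < 0 := by
    have : ∑ K ∈ S, vol K * ((ρ' K - ρ K) / δ) < ∑ K ∈ S, (0 : ℝ) := by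
      refine Finset.sum_lt_sum_of_nonempty ⟨K₀, hK₀S⟩ fun K hK => ?_
      have h1 : ρ' K - ρ K < 0 := by linarith [hSmem K hK, hρ K]
      have h2 : (ρ' K - ρ K) / δ < 0 := div_neg_of_neg_of_pos h1 hδ
      exact mul_neg_of_pos_of_neg (hvol K) h2
    simpa using this
  have hF : 0 ≤ ∑ K ∈ S, vol K * f K :=
    Finset.sum_nonneg fun K _ => mul_nonneg (hvol K).le (hf K)
  linarith
end

section
/- One-step discrete L^q stability: in the discrete upwind setting, let q ∈ (1,∞), let ρⁿ_K ≥ 0 and fⁿ_K ≥ 0 for all K ∈ 𝒯, let δ > 0, and let ρⁿ⁺¹ be the solution of one step of the implicit upwind scheme. Set λ := δ · max_{K∈𝒯} ((div u)_K)⁻, where (t)⁻ = max(−t,0). Then ‖ρⁿ⁺¹‖_{ℓ^q} · (1 − ((q−1)/q) λ) ≤ ‖ρⁿ‖_{ℓ^q} + δ ‖fⁿ‖_{ℓ^q}. -/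
open Finset Real

/-!
Test the scheme against `φ = dualPow q ρ' = sign ρ' |ρ'|^(q-1)`, the derivative of `|x|^q / q`.
The time difference gives `‖ρ'‖^q` minus a pairing of `ρ` with `φ`, and Hölder bounds that
pairing and the source pairing by `‖ρ‖ ‖ρ'‖^(q-1)` and `‖f‖ ‖ρ'‖^(q-1)`. Symmetrising the upwind
term over each edge turns it into `∑ |K∣L| u⁺_KL ρ'_K (φ_K - φ_L)`; Young's inequality gives
`ρ'_K (φ_K - φ_L) ≥ (q-1)/q (|ρ'_K|^q - |ρ'_L|^q)`, and summing by parts again leaves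
`(q-1)/q ∑ |K| (div u)_K |ρ'_K|^q ≥ -(q-1)/q (λ/δ) ‖ρ'‖^q`. Dividing by `‖ρ'‖^(q-1)` concludes.
-/

noncomputable def dualPow (q x : ℝ) : ℝ := SignType.sign x * |x| ^ (q - 1)

lemma mul_dualPow_self {q : ℝ} (hq : q ≠ 0) (x : ℝ) : x * dualPow q x = |x| ^ q := by
  rw [dualPow, ← mul_assoc, self_mul_sign, ← rpow_one_add' (abs_nonneg x) (by simpa using hq),
    add_sub_cancel]

lemma abs_dualPow_le (q x : ℝ) : |dualPow q x| ≤ |x| ^ (q - 1) := by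
  rw [dualPow, abs_mul, abs_of_nonneg (rpow_nonneg (abs_nonneg x) _)]
  refine mul_le_of_le_one_left (rpow_nonneg (abs_nonneg x) _) ?_
  rcases lt_trichotomy x 0 with hx | rfl | hx <;> simp [*]

lemma mul_dualPow_le {q : ℝ} (hq : 1 < q) (x y : ℝ) :
    x * dualPow q y ≤ |x| ^ q / q + (q - 1) / q * |y| ^ q := by
  have hconj := HolderConjugate.conjExponent hq
  have hy : (|y| ^ (q - 1)) ^ q.conjExponent = |y| ^ q := by
    rw [← rpow_mul (abs_nonneg y), conjExponent, mul_div_cancel₀ _ (sub_pos.2 hq).ne']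
  calc x * dualPow q y ≤ |x| * |y| ^ (q - 1) := by
        refine (le_abs_self _).trans ?_
        rw [abs_mul]
        exact mul_le_mul_of_nonneg_left (abs_dualPow_le q y) (abs_nonneg x)
    _ ≤ |x| ^ q / q + (|y| ^ (q - 1)) ^ q.conjExponent / q.conjExponent :=
        young_inequality_of_nonneg (abs_nonneg x) (rpow_nonneg (abs_nonneg y) _) hconj
    _ = |x| ^ q / q + (q - 1) / q * |y| ^ q := by
        rw [hy, conjExponent, div_div_eq_mul_div]; ring

lemma mul_sub_rpow_le_mul_dualPow_sub {q : ℝ} (hq : 1 < q) (x y : ℝ) :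
    (q - 1) / q * (|x| ^ q - |y| ^ q) ≤ x * (dualPow q x - dualPow q y) := by
  have hx := mul_dualPow_self (by positivity : q ≠ 0) x
  have hxy := mul_dualPow_le hq x y
  have : |x| ^ q = |x| ^ q / q + (q - 1) / q * |x| ^ q := by field_simp; ring
  linarith

lemma sum_mul_mul_rpow_le {ι : Type*} (s : Finset ι) {q : ℝ} (hq : 1 < q) {w a b : ι → ℝ}
    (hw : ∀ i ∈ s, 0 ≤ w i) (ha : ∀ i ∈ s, 0 ≤ a i) (hb : ∀ i ∈ s, 0 ≤ b i) :
    ∑ i ∈ s, w i * (a i * b i ^ (q - 1)) ≤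
      (∑ i ∈ s, w i * a i ^ q) ^ (1 / q) * (∑ i ∈ s, w i * b i ^ q) ^ ((q - 1) / q) := by
  have hq1 : 0 < q - 1 := by linarith
  have hconj := HolderConjugate.conjExponent hq
  rw [conjExponent] at hconj
  have hexp : 1 / q + (q - 1) / q = 1 := by field_simp; ring
  have hpow (i) (hi : i ∈ s) (r : ℝ) (hr : 0 < r) (x : ℝ) (hx : 0 ≤ x) :
      (w i ^ (1 / r) * x) ^ r = w i * x ^ r := by
    rw [mul_rpow (rpow_nonneg (hw i hi) _) hx, ← rpow_mul (hw i hi), one_div_mul_cancel hr.ne',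
      rpow_one]
  have hw_split (i) (hi : i ∈ s) : w i ^ (1 / q) * w i ^ (1 / (q / (q - 1))) = w i := by
    rw [one_div_div, ← rpow_add' (hw i hi) (by rw [hexp]; exact one_ne_zero), hexp, rpow_one]
  calc ∑ i ∈ s, w i * (a i * b i ^ (q - 1))
      = ∑ i ∈ s, (w i ^ (1 / q) * a i) * (w i ^ (1 / (q / (q - 1))) * b i ^ (q - 1)) :=
        sum_congr rfl fun i hi => by rw [mul_mul_mul_comm, hw_split i hi]
    _ ≤ (∑ i ∈ s, (w i ^ (1 / q) * a i) ^ q) ^ (1 / q) *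
          (∑ i ∈ s, (w i ^ (1 / (q / (q - 1))) * b i ^ (q - 1)) ^ (q / (q - 1))) ^
            (1 / (q / (q - 1))) :=
        inner_le_Lp_mul_Lq_of_nonneg s hconj
          (fun i hi => mul_nonneg (rpow_nonneg (hw i hi) _) (ha i hi))
          (fun i hi => mul_nonneg (rpow_nonneg (hw i hi) _) (rpow_nonneg (hb i hi) _))
    _ = _ := by
        rw [one_div_div]
        congr 2 <;> refine sum_congr rfl fun i hi => ?_
        · exact hpow i hi q (by linarith) _ (ha i hi)
        · rw [← one_div_div, hpow i hi _ (by positivity) _ (rpow_nonneg (hb i hi) _),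
            ← rpow_mul (hb i hi), mul_div_cancel₀ _ hq1.ne']

lemma sum_mul_mul_dualPow_le {ι : Type*} (s : Finset ι) {q : ℝ} (hq : 1 < q) {w : ι → ℝ}
    (hw : ∀ i ∈ s, 0 ≤ w i) (a b : ι → ℝ) :
    ∑ i ∈ s, w i * a i * dualPow q (b i) ≤
      (∑ i ∈ s, w i * |a i| ^ q) ^ (1 / q) * (∑ i ∈ s, w i * |b i| ^ q) ^ ((q - 1) / q) := by
  refine le_trans (sum_le_sum fun i hi => ?_)
    (sum_mul_mul_rpow_le s hq hw (fun i _ => abs_nonneg (a i)) fun i _ => abs_nonneg (b i))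
  rw [mul_assoc]
  refine mul_le_mul_of_nonneg_left ((le_abs_self _).trans ?_) (hw i hi)
  rw [abs_mul]
  exact mul_le_mul_of_nonneg_left (abs_dualPow_le q _) (abs_nonneg _)

lemma rpow_one_div_mul_le_of_mul_le {S c R q : ℝ} (hS : 0 ≤ S) (hR : 0 ≤ R) (hq : 0 < q)
    (h : S * c ≤ R * S ^ ((q - 1) / q)) : S ^ (1 / q) * c ≤ R := by
  rcases le_or_gt c 0 with hc | hc
  · exact (mul_nonpos_of_nonneg_of_nonpos (rpow_nonneg hS _) hc).trans hR
  rcases hS.eq_or_lt with rfl | hS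
  · rw [zero_rpow (one_div_ne_zero hq.ne'), zero_mul]; exact hR
  have hsplit : S = S ^ (1 / q) * S ^ ((q - 1) / q) := by
    rw [← rpow_add hS, ← add_div, add_sub_cancel, div_self hq.ne', rpow_one]
  refine le_of_mul_le_mul_right ?_ (rpow_pos_of_pos hS ((q - 1) / q))
  calc S ^ (1 / q) * c * S ^ ((q - 1) / q) = S ^ (1 / q) * S ^ ((q - 1) / q) * c := by ring
    _ = S * c := by rw [← hsplit]
    _ ≤ R * S ^ ((q - 1) / q) := h

section Upwind

variable {ι : Type*} [Fintype ι]

def upwindFlux (edge u : ι → ι → ℝ) (v : ι → ℝ) (K : ι) : ℝ :=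
  ∑ L, edge K L * ((u K L)⁺ * v K - (u K L)⁻ * v L)

variable {edge u : ι → ι → ℝ}

lemma sum_sum_negPart_mul_eq (hedge : ∀ K L, edge K L = edge L K) (hu : ∀ K L, u K L = -u L K)
    (g : ι → ι → ℝ) :
    ∑ K, ∑ L, edge K L * (u K L)⁻ * g K L = ∑ K, ∑ L, edge K L * (u K L)⁺ * g L K := by
  rw [sum_comm]
  refine sum_congr rfl fun K _ => sum_congr rfl fun L _ => ?_
  rw [hedge L K, hu L K, negPart_neg]

lemma sum_sum_posPart_mul_sub (hedge : ∀ K L, edge K L = edge L K) (hu : ∀ K L, u K L = -u L K)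
    (a : ι → ℝ) :
    ∑ K, ∑ L, edge K L * (u K L)⁺ * (a K - a L) = ∑ K, a K * ∑ L, edge K L * u K L := by
  have hswap := sum_sum_negPart_mul_eq hedge hu fun K _ => a K
  calc ∑ K, ∑ L, edge K L * (u K L)⁺ * (a K - a L)
      = ∑ K, ∑ L, edge K L * (u K L)⁺ * a K - ∑ K, ∑ L, edge K L * (u K L)⁻ * a K := by
        simp only [hswap, mul_sub, sum_sub_distrib]
    _ = ∑ K, a K * ∑ L, edge K L * u K L := by
        simp only [mul_sum, ← sum_sub_distrib]
        refine sum_congr rfl fun K _ => sum_congr rfl fun L _ => ?_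
        linear_combination (edge K L * a K) * posPart_sub_negPart (u K L)

lemma sum_upwindFlux_mul (hedge : ∀ K L, edge K L = edge L K) (hu : ∀ K L, u K L = -u L K)
    (v w : ι → ℝ) :
    ∑ K, upwindFlux edge u v K * w K =
      ∑ K, ∑ L, edge K L * (u K L)⁺ * (v K * (w K - w L)) := by
  have hswap := sum_sum_negPart_mul_eq hedge hu fun K L => v L * w K
  calc ∑ K, upwindFlux edge u v K * w K
      = ∑ K, ∑ L, edge K L * (u K L)⁺ * (v K * w K) -
          ∑ K, ∑ L, edge K L * (u K L)⁻ * (v L * w K) := by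
        simp only [upwindFlux, sum_mul, ← sum_sub_distrib]
        exact sum_congr rfl fun K _ => sum_congr rfl fun L _ => by ring
    _ = ∑ K, ∑ L, edge K L * (u K L)⁺ * (v K * (w K - w L)) := by
        simp only [hswap, ← sum_sub_distrib]
        exact sum_congr rfl fun K _ => sum_congr rfl fun L _ => by ring

lemma neg_mul_le_sum_mul_upwindFlux_dualPow (hedge_nonneg : ∀ K L, 0 ≤ edge K L)
    (hedge : ∀ K L, edge K L = edge L K) (hu : ∀ K L, u K L = -u L K) {q : ℝ} (hq : 1 < q)
    {vol : ι → ℝ} {M : ℝ} (hdiv : ∀ K, -(M * vol K) ≤ ∑ L, edge K L * u K L) (v : ι → ℝ) :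
    -((q - 1) / q * M * ∑ K, vol K * |v K| ^ q) ≤
      ∑ K, upwindFlux edge u v K * dualPow q (v K) := by
  have hc : 0 ≤ (q - 1) / q := div_nonneg (by linarith) (by linarith)
  rw [sum_upwindFlux_mul hedge hu]
  calc -((q - 1) / q * M * ∑ K, vol K * |v K| ^ q)
      ≤ (q - 1) / q * ∑ K, |v K| ^ q * ∑ L, edge K L * u K L := by
        rw [mul_assoc, ← mul_neg, mul_sum, ← sum_neg_distrib]
        gcongr with K
        linarith [mul_le_mul_of_nonneg_left (hdiv K) (rpow_nonneg (abs_nonneg (v K)) q)]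
    _ = ∑ K, ∑ L, edge K L * (u K L)⁺ * ((q - 1) / q * (|v K| ^ q - |v L| ^ q)) := by
        rw [← sum_sum_posPart_mul_sub hedge hu, mul_sum]
        simp only [mul_sum]
        exact sum_congr rfl fun K _ => sum_congr rfl fun L _ => by ring
    _ ≤ ∑ K, ∑ L, edge K L * (u K L)⁺ * (v K * (dualPow q (v K) - dualPow q (v L))) := by
        refine sum_le_sum fun K _ => sum_le_sum fun L _ => ?_
        exact mul_le_mul_of_nonneg_left (mul_sub_rpow_le_mul_dualPow_sub hq _ _)
          (mul_nonneg (hedge_nonneg K L) (posPart_nonneg _))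

lemma vol_mul_sub_add_mul_upwindFlux_eq [DecidableEq ι] {vol ρ ρ' f : ι → ℝ} {δ : ℝ} {K : ι} (hδ : δ ≠ 0)
    (hvol : vol K ≠ 0) (huKK : u K K = 0)
    (h : (ρ' K - ρ K) / δ + ∑ L ∈ univ.erase K, edge K L / vol K *
      ((u K L)⁺ * ρ' K - (u K L)⁻ * ρ' L) = f K) :
    vol K * (ρ' K - ρ K) + δ * upwindFlux edge u ρ' K = δ * (vol K * f K) := by
  rw [← h, upwindFlux, ← sum_erase univ (a := K) (by simp [huKK])]
  simp only [div_mul_eq_mul_div, ← sum_div]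
  field_simp

lemma neg_mul_le_of_negPart_div_le {s v M : ℝ} (hv : 0 < v) (h : (s / v)⁻ ≤ M) : -(M * v) ≤ s := by
  have : -s / v ≤ M := by rw [neg_div]; exact (neg_le_negPart (s / v)).trans h
  linarith [(div_le_iff₀ hv).1 this]

end Upwind

theorem upwind_step_Lq_stability_general {ι : Type*} [Fintype ι] [Nonempty ι] [DecidableEq ι]
    (vol : ι → ℝ) (hvol : ∀ K, 0 < vol K)
    (edge : ι → ι → ℝ) (hedge_symm : ∀ K L, edge K L = edge L K)
    (hedge_nonneg : ∀ K L, 0 ≤ edge K L)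
    (u : ι → ι → ℝ) (hu_antisymm : ∀ K L, u K L = - u L K)
    (q : ℝ) (hq : 1 < q)
    (δ : ℝ) (hδ : 0 < δ) (ρ f ρ' : ι → ℝ)
    (hstep : ∀ K : ι,
      (ρ' K - ρ K) / δ +
        ∑ L ∈ univ.erase K, edge K L / vol K *
          (max (u K L) 0 * ρ' K - max (-u K L) 0 * ρ' L) = f K)
    (lam : ℝ)
    (hlam : lam = δ * univ.sup' univ_nonempty
      (fun K => max (-((∑ L ∈ univ.erase K, edge K L * u K L) / vol K)) 0)) :
    (∑ K, vol K * |ρ' K| ^ q) ^ (1/q) * (1 - (q - 1)/q * lam) ≤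
      (∑ K, vol K * |ρ K| ^ q) ^ (1/q) + δ * (∑ K, vol K * |f K| ^ q) ^ (1/q) := by
  subst hlam
  set M := univ.sup' univ_nonempty
    (fun K => max (-((∑ L ∈ univ.erase K, edge K L * u K L) / vol K)) 0)
  have hq0 : 0 < q := by linarith
  have huKK (K : ι) : u K K = 0 := by linarith [hu_antisymm K K]
  have hdiv (K : ι) : -(M * vol K) ≤ ∑ L, edge K L * u K L := by
    rw [← sum_erase univ (a := K) (by simp [huKK])]
    exact neg_mul_le_of_negPart_div_le (hvol K) <|
      le_sup' (fun K => ((∑ L ∈ univ.erase K, edge K L * u K L) / vol K)⁻) (mem_univ K)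
  have henergy : ∑ K, vol K * |ρ' K| ^ q - ∑ K, vol K * ρ K * dualPow q (ρ' K) +
      δ * ∑ K, upwindFlux edge u ρ' K * dualPow q (ρ' K) =
        δ * ∑ K, vol K * f K * dualPow q (ρ' K) := by
    simp only [mul_sum, ← sum_sub_distrib, ← sum_add_distrib]
    refine sum_congr rfl fun K _ => ?_
    rw [← mul_dualPow_self hq0.ne' (ρ' K)]
    -- `max a 0` and `max (-a) 0` are `a⁺` and `a⁻` by definition
    linear_combination dualPow q (ρ' K) *
      vol_mul_sub_add_mul_upwindFlux_eq hδ.ne' (hvol K).ne' (huKK K) (hstep K)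
  have hconv := neg_mul_le_sum_mul_upwindFlux_dualPow hedge_nonneg hedge_symm hu_antisymm hq
    hdiv ρ'
  have hρ_holder := sum_mul_mul_dualPow_le univ hq (fun K _ => (hvol K).le) ρ ρ'
  have hf_holder := sum_mul_mul_dualPow_le univ hq (fun K _ => (hvol K).le) f ρ'
  have hsum_nonneg (g : ι → ℝ) : 0 ≤ ∑ K, vol K * |g K| ^ q :=
    sum_nonneg fun K _ => mul_nonneg (hvol K).le (by positivity)
  refine rpow_one_div_mul_le_of_mul_le (hsum_nonneg ρ') (add_nonneg (rpow_nonneg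
    (hsum_nonneg ρ) _) (mul_nonneg hδ.le (rpow_nonneg (hsum_nonneg f) _))) hq0 ?_
  linarith [hρ_holder, mul_le_mul_of_nonneg_left hf_holder hδ.le,
    mul_le_mul_of_nonneg_left hconv hδ.le]

/-- **One-step discrete `L^q` stability of the implicit upwind scheme.**
For `q ∈ (1,∞)`, nonnegative data `ρ`, `f`, time step `δ > 0` and `ρ'` the solution of
one step of the implicit upwind scheme, with `λ := δ · max_K ((div u)_K)⁻` one has
`‖ρ'‖_{ℓ^q} (1 − ((q−1)/q) λ) ≤ ‖ρ‖_{ℓ^q} + δ ‖f‖_{ℓ^q}`. -/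
theorem upwind_step_Lq_stability {ι : Type*} [Fintype ι] [Nonempty ι] [DecidableEq ι]
    (vol : ι → ℝ) (hvol : ∀ K, 0 < vol K)
    (edge : ι → ι → ℝ) (hedge_symm : ∀ K L, edge K L = edge L K)
    (hedge_nonneg : ∀ K L, 0 ≤ edge K L)
    (u : ι → ι → ℝ) (hu_antisymm : ∀ K L, u K L = - u L K)
    (hu_edge : ∀ K L, edge K L = 0 → u K L = 0)
    (q : ℝ) (hq : 1 < q)
    (δ : ℝ) (hδ : 0 < δ) (ρ f ρ' : ι → ℝ)
    (hρ : ∀ K, 0 ≤ ρ K) (hf : ∀ K, 0 ≤ f K)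
    (hstep : ∀ K : ι,
      (ρ' K - ρ K) / δ +
        ∑ L ∈ univ.erase K, edge K L / vol K *
          (max (u K L) 0 * ρ' K - max (-u K L) 0 * ρ' L) = f K)
    (lam : ℝ)
    (hlam : lam = δ * univ.sup' univ_nonempty
      (fun K => max (-((∑ L ∈ univ.erase K, edge K L * u K L) / vol K)) 0)) :
    (∑ K, vol K * |ρ' K| ^ q) ^ (1/q) * (1 - (q - 1)/q * lam) ≤
      (∑ K, vol K * |ρ K| ^ q) ^ (1/q) + δ * (∑ K, vol K * |f K| ^ q) ^ (1/q) :=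
  upwind_step_Lq_stability_general vol hvol edge hedge_symm hedge_nonneg u hu_antisymm q hq δ hδ ρ f
    ρ' hstep lam hlam
end

section
/- Discrete L^q stability (iterated): in the discrete upwind setting with N time steps, let q ∈ (1,∞) and κ > 1. Suppose ρ⁰_K ≥ 0 and fⁿ_K ≥ 0 for all K and n, and for each n ∈ {0,…,N−1} let ρⁿ⁺¹ solve one step of the implicit upwind scheme with data ρⁿ, fⁿ, fluxes uⁿ and time step δ > 0. Set λⁿ := δ · max_{K∈𝒯} ((div uⁿ)_K)⁻ and Λ := exp(Σ_{n=0}^{N−1} λⁿ). If ((q−1)/q) λⁿ ≤ (κ−1)/κ for every n, then max_{0 ≤ n ≤ N} ‖ρⁿ‖_{ℓ^q} ≤ Λ^{κ(1−1/q)} ( ‖ρ⁰‖_{ℓ^q} + Σ_{n=0}^{N−1} δ ‖fⁿ‖_{ℓ^q} ). -/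
open Finset Real

/-!
Multiplying the scheme by `δ |K|` puts it in the form `|K| x + F(x) = |K| (y + δ g)`, where
`F(x)_K = ∑_L (P_{KL} x_K - P_{LK} x_L)` is a net outflux with coefficients
`P_{KL} = δ |K∣L| u⁺_{KL} ≥ 0`. Testing this equation with the indicator of `{x < 0}` shows that
the scheme preserves nonnegativity. Testing it with `x^{q-1}`, Young's inequality on each edge
bounds the flux term from below by `(1 - 1/q) ∑_K x_K^q F(1)_K`, and `F(1)_K = δ |K| (div u)_K`
is at least `-λ |K|`. With Hölder and Minkowski this gives
`(1 - t) ‖x‖ ≤ ‖y‖ + δ ‖g‖` for `t = (1 - 1/q) λ`, and the CFL condition `t ≤ (κ - 1)/κ` makes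
`(1 - t) e^{κ t} ≥ 1`. Each step thus amplifies by at most `e^{κ (1 - 1/q) λⁿ}`, and a discrete
Grönwall argument concludes.
-/

lemma one_le_one_sub_mul_exp {κ t : ℝ} (hκ : 0 < κ) (ht : 0 ≤ t) (htκ : t ≤ (κ - 1) / κ) :
    1 ≤ (1 - t) * exp (κ * t) := by
  have hκt : κ * t ≤ κ - 1 := by rwa [le_div_iff₀ hκ, mul_comm] at htκ
  calc 1 ≤ (1 - t) * (κ * t + 1) := by nlinarith
    _ ≤ (1 - t) * exp (κ * t) := mul_le_mul_of_nonneg_left (add_one_le_exp _) (by nlinarith)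

lemma le_exp_sum_mul_add_sum {a b c : ℕ → ℝ} {N : ℕ} (ha : 0 ≤ a 0) (hb : ∀ n, 0 ≤ b n)
    (hc : ∀ n, 0 ≤ c n) (h : ∀ n < N, a (n + 1) ≤ exp (c n) * (a n + b n)) {n : ℕ} (hn : n ≤ N) :
    a n ≤ exp (∑ m ∈ range N, c m) * (a 0 + ∑ m ∈ range N, b m) := by
  have hpartial : ∀ n ≤ N, a n ≤ exp (∑ m ∈ range n, c m) * (a 0 + ∑ m ∈ range n, b m) := by
    intro n hn
    induction n with
    | zero => simp
    | succ n ih =>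
      have hexp : 1 ≤ exp (∑ m ∈ range n, c m) := one_le_exp (sum_nonneg fun m _ => hc m)
      calc a (n + 1) ≤ exp (c n) * (a n + b n) := h n hn
        _ ≤ exp (c n) * (exp (∑ m ∈ range n, c m) * (a 0 + ∑ m ∈ range n, b m)
              + exp (∑ m ∈ range n, c m) * b n) := by
          gcongr
          exacts [ih (by omega), le_mul_of_one_le_left (hb n) hexp]
        _ = exp (∑ m ∈ range (n + 1), c m) * (a 0 + ∑ m ∈ range (n + 1), b m) := by
          rw [sum_range_succ, sum_range_succ, add_comm _ (c n), exp_add]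
          ring
  refine (hpartial n hn).trans ?_
  gcongr
  · exact add_nonneg ha (sum_nonneg fun m _ => hb m)
  · exact fun m _ _ => hc m
  · exact fun m _ _ => hb m

lemma mul_rpow_sub_one_le {a b q : ℝ} (ha : 0 ≤ a) (hb : 0 ≤ b) (hq : 1 < q) :
    a * b ^ (q - 1) ≤ a ^ q / q + (1 - 1 / q) * b ^ q := by
  have hqp := HolderConjugate.conjExponent hq
  have hyoung := young_inequality_of_nonneg ha (rpow_nonneg hb (q - 1)) hqp
  rwa [← rpow_mul hb, hqp.sub_one_mul_conj, div_eq_mul_inv _ q.conjExponent, ← hqp.one_sub_inv,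
    mul_comm (b ^ q), ← one_div] at hyoung

lemma rpow_sub_one_mul_self {a q : ℝ} (ha : 0 ≤ a) (hq : q ≠ 0) : a ^ (q - 1) * a = a ^ q := by
  rw [← rpow_add_one' ha (by simpa using hq), sub_add_cancel]

namespace Upwind

section Energy

variable {ι : Type*} [Fintype ι]

noncomputable def weightedLpNorm (w : ι → ℝ) (q : ℝ) (v : ι → ℝ) : ℝ :=
  (∑ K, w K * |v K| ^ q) ^ (1 / q)

variable {w : ι → ℝ} {q : ℝ}

lemma weightedLpNorm_nonneg (hw : ∀ K, 0 ≤ w K) (v : ι → ℝ) : 0 ≤ weightedLpNorm w q v :=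
  rpow_nonneg (sum_nonneg fun K _ => mul_nonneg (hw K) (rpow_nonneg (abs_nonneg _) _)) _

lemma weightedLpNorm_eq_Lp (hw : ∀ K, 0 ≤ w K) (hq : q ≠ 0) (v : ι → ℝ) :
    weightedLpNorm w q v = (∑ K, |w K ^ (1 / q) * v K| ^ q) ^ (1 / q) := by
  unfold weightedLpNorm
  congr 1
  refine sum_congr rfl fun K _ => ?_
  rw [abs_mul, abs_of_nonneg (rpow_nonneg (hw K) _),
    mul_rpow (rpow_nonneg (hw K) _) (abs_nonneg _), one_div, rpow_inv_rpow (hw K) hq]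

lemma weightedLpNorm_add_le (hw : ∀ K, 0 ≤ w K) (hq : 1 ≤ q) (v v' : ι → ℝ) :
    weightedLpNorm w q (v + v') ≤ weightedLpNorm w q v + weightedLpNorm w q v' := by
  have hq0 : q ≠ 0 := by positivity
  simp only [weightedLpNorm_eq_Lp hw hq0, Pi.add_apply, mul_add]
  exact Real.Lp_add_le _ _ _ hq

lemma weightedLpNorm_const_smul (hw : ∀ K, 0 ≤ w K) (hq : 0 < q) (c : ℝ) (v : ι → ℝ) :
    weightedLpNorm w q (c • v) = |c| * weightedLpNorm w q v := by
  have hsum : ∑ K, w K * |(c • v) K| ^ q = |c| ^ q * ∑ K, w K * |v K| ^ q := by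
    rw [mul_sum]
    refine sum_congr rfl fun K _ => ?_
    rw [Pi.smul_apply, smul_eq_mul, abs_mul, mul_rpow (abs_nonneg _) (abs_nonneg _)]
    ring
  rw [weightedLpNorm, hsum, mul_rpow (by positivity)
    (sum_nonneg fun K _ => mul_nonneg (hw K) (by positivity)), one_div,
    rpow_rpow_inv (abs_nonneg _) hq.ne', ← one_div]
  rfl

lemma sum_mul_mul_le_weightedLpNorm_mul {p : ℝ} (hpq : p.HolderConjugate q)
    (hw : ∀ K, 0 ≤ w K) (a b : ι → ℝ) :
    ∑ K, w K * a K * b K ≤ weightedLpNorm w p a * weightedLpNorm w q b := by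
  rw [weightedLpNorm_eq_Lp hw hpq.ne_zero, weightedLpNorm_eq_Lp hw hpq.symm.ne_zero]
  refine le_of_eq_of_le (sum_congr rfl fun K _ => ?_) (Real.inner_le_Lp_mul_Lq _ _ _ hpq)
  rw [mul_mul_mul_comm, ← rpow_add' (hw K) (by simp [hpq.inv_add_inv_eq_one]),
    one_div, one_div, hpq.inv_add_inv_eq_one, rpow_one, mul_assoc]

-- The diagonal terms cancel, so summing over all `L` agrees with the scheme's sum over `L ≠ K`.
def upwindFlux (P : ι → ι → ℝ) (x : ι → ℝ) (K : ι) : ℝ :=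
  ∑ L, (P K L * x K - P L K * x L)

lemma upwindFlux_eq_sum_erase [DecidableEq ι] (P : ι → ι → ℝ) (x : ι → ℝ) (K : ι) :
    upwindFlux P x K = ∑ L ∈ univ.erase K, (P K L * x K - P L K * x L) :=
  (sum_erase _ (sub_self _)).symm

lemma sum_mul_upwindFlux (P : ι → ι → ℝ) (x φ : ι → ℝ) :
    ∑ K, φ K * upwindFlux P x K = ∑ K, ∑ L, P K L * x K * (φ K - φ L) := by
  have hswap : ∑ K, ∑ L, φ K * (P L K * x L) = ∑ K, ∑ L, φ L * (P K L * x K) := sum_comm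
  simp only [upwindFlux, mul_sum, mul_sub, sum_sub_distrib, hswap]
  congr 1 <;> exact sum_congr rfl fun K _ => sum_congr rfl fun L _ => by ring

variable {P : ι → ι → ℝ} {x r : ι → ℝ}

lemma nonneg_of_add_upwindFlux_eq (hw : ∀ K, 0 < w K) (hP : ∀ K L, 0 ≤ P K L)
    (hr : ∀ K, 0 ≤ r K) (h : ∀ K, w K * x K + upwindFlux P x K = w K * r K) (K : ι) :
    0 ≤ x K := by
  by_contra! hK
  set φ : ι → ℝ := fun K => if x K < 0 then 1 else 0
  have hφ : ∀ K, 0 ≤ φ K := fun K => by positivity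
  have hmass : ∑ K, φ K * (w K * x K) < 0 :=
    sum_neg' (fun L _ => by
        by_cases hL : x L < 0
        · simpa [φ, hL] using (mul_neg_of_pos_of_neg (hw L) hL).le
        · simp [φ, hL])
      ⟨K, mem_univ K, by simpa [φ, hK] using mul_neg_of_pos_of_neg (hw K) hK⟩
  have hflux : ∑ K, φ K * upwindFlux P x K ≤ 0 := by
    rw [sum_mul_upwindFlux]
    refine sum_nonpos fun K _ => sum_nonpos fun L _ => ?_
    rw [mul_assoc]
    refine mul_nonpos_of_nonneg_of_nonpos (hP K L) ?_
    by_cases hxK : x K < 0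
    · refine mul_nonpos_of_nonpos_of_nonneg hxK.le ?_
      simp only [φ, hxK, if_true]
      split_ifs <;> norm_num
    · simpa [φ, hxK] using mul_nonneg (not_lt.1 hxK) (hφ L)
  have hsource : 0 ≤ ∑ K, φ K * (w K * r K) :=
    sum_nonneg fun K _ => mul_nonneg (hφ K) (mul_nonneg (hw K).le (hr K))
  have htested : ∑ K, φ K * (w K * x K) + ∑ K, φ K * upwindFlux P x K
      = ∑ K, φ K * (w K * r K) := by
    rw [← sum_add_distrib]
    exact sum_congr rfl fun K _ => by rw [← mul_add, h]
  linarith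

lemma one_sub_inv_mul_sum_rpow_mul_upwindFlux_le (hP : ∀ K L, 0 ≤ P K L) (hx : ∀ K, 0 ≤ x K)
    (hq : 1 < q) :
    (1 - 1 / q) * ∑ K, x K ^ q * upwindFlux P 1 K ≤ ∑ K, x K ^ (q - 1) * upwindFlux P x K := by
  rw [sum_mul_upwindFlux, sum_mul_upwindFlux, mul_sum]
  refine sum_le_sum fun K _ => ?_
  rw [mul_sum]
  refine sum_le_sum fun L _ => ?_
  have hyoung := mul_rpow_sub_one_le (hx K) (hx L) hq
  have hself := rpow_sub_one_mul_self (hx K) (by positivity : q ≠ 0)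
  have hqdiv : x K ^ q / q = 1 / q * x K ^ q := by ring
  simp only [Pi.one_apply, mul_one]
  rw [mul_left_comm, mul_assoc]
  refine mul_le_mul_of_nonneg_left ?_ (hP K L)
  nlinarith

lemma one_sub_mul_weightedLpNorm_le (hw : ∀ K, 0 ≤ w K) (hP : ∀ K L, 0 ≤ P K L) (hq : 1 < q)
    {lam : ℝ} (hdiv : ∀ K, -(lam * w K) ≤ upwindFlux P 1 K) (hx : ∀ K, 0 ≤ x K)
    (h : ∀ K, w K * x K + upwindFlux P x K = w K * r K) :
    (1 - (1 - 1 / q) * lam) * weightedLpNorm w q x ≤ weightedLpNorm w q r := by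
  have hq0 : q ≠ 0 := by positivity
  set p := q.conjExponent
  have hqp : q.HolderConjugate p := HolderConjugate.conjExponent hq
  have hp : 1 / p = 1 - 1 / q := by rw [one_div, one_div, hqp.one_sub_inv]
  set S := ∑ K, w K * x K ^ q
  have hS : 0 ≤ S := sum_nonneg fun K _ => mul_nonneg (hw K) (rpow_nonneg (hx K) q)
  have hnorm : weightedLpNorm w q x = S ^ (1 / q) := by
    simp only [weightedLpNorm, abs_of_nonneg (hx _), S]
  have htested : S + ∑ K, x K ^ (q - 1) * upwindFlux P x K = ∑ K, w K * x K ^ (q - 1) * r K := by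
    rw [← sum_add_distrib]
    refine sum_congr rfl fun K _ => ?_
    rw [← rpow_sub_one_mul_self (hx K) hq0]
    linear_combination x K ^ (q - 1) * h K
  have hdiss : -((1 - 1 / q) * lam * S) ≤ ∑ K, x K ^ (q - 1) * upwindFlux P x K := by
    have hflux : -(lam * S) ≤ ∑ K, x K ^ q * upwindFlux P 1 K := by
      rw [mul_sum, ← sum_neg_distrib]
      refine sum_le_sum fun K _ => ?_
      have := mul_le_mul_of_nonneg_left (hdiv K) (rpow_nonneg (hx K) q)
      linarith
    calc -((1 - 1 / q) * lam * S) = (1 - 1 / q) * -(lam * S) := by ring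
      _ ≤ (1 - 1 / q) * ∑ K, x K ^ q * upwindFlux P 1 K := by
        gcongr
        exact hp ▸ hqp.symm.one_div_nonneg
      _ ≤ _ := one_sub_inv_mul_sum_rpow_mul_upwindFlux_le hP hx hq
  have hholder : ∑ K, w K * x K ^ (q - 1) * r K ≤ S ^ (1 - 1 / q) * weightedLpNorm w q r := by
    refine (sum_mul_mul_le_weightedLpNorm_mul hqp.symm hw _ r).trans_eq ?_
    rw [weightedLpNorm, hp]
    congr 2
    refine sum_congr rfl fun K _ => ?_
    rw [abs_of_nonneg (rpow_nonneg (hx K) _), ← rpow_mul (hx K), hqp.sub_one_mul_conj]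
  rcases hS.eq_or_lt with hS0 | hSpos
  · rw [hnorm, ← hS0, zero_rpow (by positivity), mul_zero]
    exact weightedLpNorm_nonneg hw r
  · have hsplit : S = S ^ (1 - 1 / q) * S ^ (1 / q) := by
      rw [← rpow_add hSpos, sub_add_cancel, rpow_one]
    rw [hnorm]
    refine le_of_mul_le_mul_left ?_ (rpow_pos_of_pos hSpos (1 - 1 / q))
    calc S ^ (1 - 1 / q) * ((1 - (1 - 1 / q) * lam) * S ^ (1 / q))
        = (1 - (1 - 1 / q) * lam) * S := by rw [mul_left_comm, ← hsplit]
      _ ≤ S ^ (1 - 1 / q) * weightedLpNorm w q r := by linarith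

lemma weightedLpNorm_le_exp_mul_of_upwind_step (hw : ∀ K, 0 ≤ w K)
    (hP : ∀ K L, 0 ≤ P K L) (hq : 1 < q) {κ lam δ : ℝ} (hκ : 0 < κ) (hlam : 0 ≤ lam)
    (hCFL : (1 - 1 / q) * lam ≤ (κ - 1) / κ) (hdiv : ∀ K, -(lam * w K) ≤ upwindFlux P 1 K)
    (hδ : 0 ≤ δ) {y g : ι → ℝ} (hx : ∀ K, 0 ≤ x K)
    (h : ∀ K, w K * x K + upwindFlux P x K = w K * (y + δ • g) K) :
    weightedLpNorm w q x ≤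
      exp (κ * (1 - 1 / q) * lam) * (weightedLpNorm w q y + δ * weightedLpNorm w q g) := by
  have ht : 0 ≤ (1 - 1 / q) * lam :=
    mul_nonneg (sub_nonneg.2 ((div_le_one (by positivity)).2 hq.le)) hlam
  have hsource :
      weightedLpNorm w q (y + δ • g) ≤ weightedLpNorm w q y + δ * weightedLpNorm w q g := by
    have := weightedLpNorm_add_le hw hq.le y (δ • g)
    rwa [weightedLpNorm_const_smul hw (by positivity), abs_of_nonneg hδ] at this
  calc weightedLpNorm w q x
      ≤ ((1 - (1 - 1 / q) * lam) * exp (κ * ((1 - 1 / q) * lam))) * weightedLpNorm w q x :=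
        le_mul_of_one_le_left (weightedLpNorm_nonneg hw x) (one_le_one_sub_mul_exp hκ ht hCFL)
    _ = exp (κ * (1 - 1 / q) * lam) * ((1 - (1 - 1 / q) * lam) * weightedLpNorm w q x) := by
        ring_nf
    _ ≤ exp (κ * (1 - 1 / q) * lam) * (weightedLpNorm w q y + δ * weightedLpNorm w q g) := by
        gcongr
        exact (one_sub_mul_weightedLpNorm_le hw hP hq hdiv hx h).trans hsource

end Energy

section Scheme

variable {ι : Type*} {δ : ℝ} {edge u : ι → ι → ℝ}

def upwindCoeff (δ : ℝ) (edge u : ι → ι → ℝ) (K L : ι) : ℝ :=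
  δ * (edge K L * max (u K L) 0)

lemma upwindCoeff_nonneg (hδ : 0 ≤ δ) (hedge : ∀ K L, 0 ≤ edge K L) (K L : ι) :
    0 ≤ upwindCoeff δ edge u K L :=
  mul_nonneg hδ (mul_nonneg (hedge K L) (le_max_right _ _))

variable [Fintype ι] [DecidableEq ι]

lemma upwindFlux_upwindCoeff (hedge : ∀ K L, edge K L = edge L K) (hu : ∀ K L, u K L = -u L K)
    (x : ι → ℝ) (K : ι) :
    upwindFlux (upwindCoeff δ edge u) x K =
      δ * ∑ L ∈ univ.erase K, edge K L * (max (u K L) 0 * x K - max (-u K L) 0 * x L) := by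
  rw [upwindFlux_eq_sum_erase, mul_sum]
  refine sum_congr rfl fun L _ => ?_
  rw [upwindCoeff, upwindCoeff, hedge L K, hu L K]
  ring

lemma upwindFlux_one_upwindCoeff (hedge : ∀ K L, edge K L = edge L K)
    (hu : ∀ K L, u K L = -u L K) (K : ι) :
    upwindFlux (upwindCoeff δ edge u) 1 K = δ * ∑ L ∈ univ.erase K, edge K L * u K L := by
  simp only [upwindFlux_upwindCoeff hedge hu, Pi.one_apply, mul_one,
    max_zero_sub_max_neg_zero_eq_self]

lemma neg_mul_le_upwindFlux_one [Nonempty ι] (hedge : ∀ K L, edge K L = edge L K)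
    (hu : ∀ K L, u K L = -u L K) {vol : ι → ℝ} (hvol : ∀ K, 0 < vol K) (hδ : 0 ≤ δ) (K : ι) :
    -(δ * univ.sup' univ_nonempty
        (fun K => max (-((∑ L ∈ univ.erase K, edge K L * u K L) / vol K)) 0) * vol K) ≤
      upwindFlux (upwindCoeff δ edge u) 1 K := by
  have hK := le_sup'_of_le
    (fun K => max (-((∑ L ∈ univ.erase K, edge K L * u K L) / vol K)) 0) (mem_univ K)
    (le_max_left _ _)
  rw [← neg_div, div_le_iff₀ (hvol K)] at hK
  rw [upwindFlux_one_upwindCoeff hedge hu]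
  nlinarith

lemma add_upwindFlux_upwindCoeff_eq (hedge : ∀ K L, edge K L = edge L K)
    (hu : ∀ K L, u K L = -u L K) {vol x y g : ι → ℝ} {K : ι} (hvol : vol K ≠ 0) (hδ : δ ≠ 0)
    (h : (x K - y K) / δ + ∑ L ∈ univ.erase K, edge K L / vol K *
        (max (u K L) 0 * x K - max (-u K L) 0 * x L) = g K) :
    vol K * x K + upwindFlux (upwindCoeff δ edge u) x K = vol K * (y + δ • g) K := by
  rw [upwindFlux_upwindCoeff hedge hu, Pi.add_apply, Pi.smul_apply, smul_eq_mul, ← h]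
  simp only [div_mul_eq_mul_div, ← sum_div]
  field_simp
  ring

end Scheme

end Upwind

open Upwind

theorem upwind_iterated_Lq_stability_general {ι : Type*} [Fintype ι] [Nonempty ι] [DecidableEq ι]
    (vol : ι → ℝ) (hvol : ∀ K, 0 < vol K)
    (edge : ι → ι → ℝ) (hedge_symm : ∀ K L, edge K L = edge L K)
    (hedge_nonneg : ∀ K L, 0 ≤ edge K L)
    (u : ℕ → ι → ι → ℝ) (hu_antisymm : ∀ n K L, u n K L = - u n L K)
    (q κ : ℝ) (hq : 1 < q) (hκ : 1 < κ)
    (δ : ℝ) (hδ : 0 < δ) (N : ℕ) (ρ f : ℕ → ι → ℝ)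
    (hρ0 : ∀ K, 0 ≤ ρ 0 K) (hf : ∀ n K, 0 ≤ f n K)
    (hstep : ∀ n < N, ∀ K : ι,
      (ρ (n+1) K - ρ n K) / δ +
        ∑ L ∈ univ.erase K, edge K L / vol K *
          (max (u n K L) 0 * ρ (n+1) K - max (-u n K L) 0 * ρ (n+1) L) = f n K)
    (lam : ℕ → ℝ)
    (hlam : ∀ n, lam n = δ * univ.sup' univ_nonempty
      (fun K => max (-((∑ L ∈ univ.erase K, edge K L * u n K L) / vol K)) 0))
    (hCFL : ∀ n < N, (q - 1)/q * lam n ≤ (κ - 1)/κ) :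
    ∀ n ≤ N, (∑ K, vol K * |ρ n K| ^ q) ^ (1/q) ≤
      (Real.exp (∑ m ∈ Finset.range N, lam m)) ^ (κ * (1 - 1/q)) *
        ((∑ K, vol K * |ρ 0 K| ^ q) ^ (1/q) +
          ∑ m ∈ Finset.range N, δ * (∑ K, vol K * |f m K| ^ q) ^ (1/q)) := by
  have hw : ∀ K, 0 ≤ vol K := fun K => (hvol K).le
  have hP : ∀ n K L, 0 ≤ upwindCoeff δ edge (u n) K L := fun n =>
    upwindCoeff_nonneg hδ.le hedge_nonneg
  have hscheme : ∀ n < N, ∀ K, vol K * ρ (n + 1) K +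
      upwindFlux (upwindCoeff δ edge (u n)) (ρ (n + 1)) K = vol K * (ρ n + δ • f n) K :=
    fun n hn K => add_upwindFlux_upwindCoeff_eq hedge_symm (hu_antisymm n) (hvol K).ne' hδ.ne'
      (hstep n hn K)
  have hdiv : ∀ n K, -(lam n * vol K) ≤ upwindFlux (upwindCoeff δ edge (u n)) 1 K := fun n K =>
    hlam n ▸ neg_mul_le_upwindFlux_one hedge_symm (hu_antisymm n) hvol hδ.le K
  have hlam0 : ∀ n, 0 ≤ lam n := fun n => hlam n ▸ mul_nonneg hδ.le
    (le_sup'_of_le _ (mem_univ (Classical.arbitrary ι)) (le_max_right _ _))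
  have hρ : ∀ n ≤ N, ∀ K, 0 ≤ ρ n K := by
    intro n hn
    induction n with
    | zero => exact hρ0
    | succ n ih =>
      exact nonneg_of_add_upwindFlux_eq hvol (hP n)
        (fun K => add_nonneg (ih (by omega) K) (mul_nonneg hδ.le (hf n K))) (hscheme n hn)
  have hone_step : ∀ n < N, weightedLpNorm vol q (ρ (n + 1)) ≤ exp (κ * (1 - 1 / q) * lam n) *
      (weightedLpNorm vol q (ρ n) + δ * weightedLpNorm vol q (f n)) :=
    fun n hn => weightedLpNorm_le_exp_mul_of_upwind_step hw (hP n) hq (by linarith) (hlam0 n)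
      (by rw [one_sub_div (by positivity)]; exact hCFL n hn) (hdiv n) hδ.le (hρ (n + 1) hn)
      (hscheme n hn)
  intro n hn
  rw [← exp_mul, mul_comm (∑ m ∈ range N, lam m), mul_sum]
  have hκq : 0 ≤ κ * (1 - 1 / q) :=
    mul_nonneg (by linarith) (sub_nonneg.2 ((div_le_one (by linarith)).2 hq.le))
  exact le_exp_sum_mul_add_sum (a := fun m => weightedLpNorm vol q (ρ m))
    (b := fun m => δ * weightedLpNorm vol q (f m)) (c := fun m => κ * (1 - 1 / q) * lam m)
    (weightedLpNorm_nonneg hw _) (fun m => mul_nonneg hδ.le (weightedLpNorm_nonneg hw _))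
    (fun m => mul_nonneg hκq (hlam0 m)) hone_step hn

/-- **Iterated discrete `L^q` stability of the implicit upwind scheme.**
With `N` time steps, `q ∈ (1,∞)`, `κ > 1`, nonnegative data, time step `δ > 0`,
`λⁿ := δ · max_K ((div uⁿ)_K)⁻` and `Λ := exp(∑ₙ λⁿ)`, if `((q−1)/q) λⁿ ≤ (κ−1)/κ`
for every `n < N`, then
`max_{0 ≤ n ≤ N} ‖ρⁿ‖_{ℓ^q} ≤ Λ^{κ(1−1/q)} (‖ρ⁰‖_{ℓ^q} + ∑ₙ δ‖fⁿ‖_{ℓ^q})`. -/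
theorem upwind_iterated_Lq_stability {ι : Type*} [Fintype ι] [Nonempty ι] [DecidableEq ι]
    (vol : ι → ℝ) (hvol : ∀ K, 0 < vol K)
    (edge : ι → ι → ℝ) (hedge_symm : ∀ K L, edge K L = edge L K)
    (hedge_nonneg : ∀ K L, 0 ≤ edge K L)
    (u : ℕ → ι → ι → ℝ) (hu_antisymm : ∀ n K L, u n K L = - u n L K)
    (hu_edge : ∀ n K L, edge K L = 0 → u n K L = 0)
    (q κ : ℝ) (hq : 1 < q) (hκ : 1 < κ)
    (δ : ℝ) (hδ : 0 < δ) (N : ℕ) (ρ f : ℕ → ι → ℝ)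
    (hρ0 : ∀ K, 0 ≤ ρ 0 K) (hf : ∀ n K, 0 ≤ f n K)
    (hstep : ∀ n < N, ∀ K : ι,
      (ρ (n+1) K - ρ n K) / δ +
        ∑ L ∈ univ.erase K, edge K L / vol K *
          (max (u n K L) 0 * ρ (n+1) K - max (-u n K L) 0 * ρ (n+1) L) = f n K)
    (lam : ℕ → ℝ)
    (hlam : ∀ n, lam n = δ * univ.sup' univ_nonempty
      (fun K => max (-((∑ L ∈ univ.erase K, edge K L * u n K L) / vol K)) 0))
    (hCFL : ∀ n < N, (q - 1)/q * lam n ≤ (κ - 1)/κ) :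
    ∀ n ≤ N, (∑ K, vol K * |ρ n K| ^ q) ^ (1/q) ≤
      (Real.exp (∑ m ∈ Finset.range N, lam m)) ^ (κ * (1 - 1/q)) *
        ((∑ K, vol K * |ρ 0 K| ^ q) ^ (1/q) +
          ∑ m ∈ Finset.range N, δ * (∑ K, vol K * |f m K| ^ q) ^ (1/q)) :=
  upwind_iterated_Lq_stability_general vol hvol edge hedge_symm hedge_nonneg u hu_antisymm q κ hq hκ
    δ hδ N ρ f hρ0 hf hstep lam hlam hCFL
end

section
/- Monotonicity of the q-mean in q: for all positive reals a ≠ b, the function q ↦ θ_q(a,b) is strictly increasing on (1,∞), where θ_q(a,b) := ((q−1)/q) (a^q − b^q)/(a^{q−1} − b^{q−1}). That is, for 1 < q₁ < q₂ one has θ_{q₁}(a,b) < θ_{q₂}(a,b). -/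
/-!
With `d = (log a - log b) / 2` one has `a ^ q - b ^ q = 2 √(ab) ^ q sinh (q d)`, hence
`θ_q(a,b) = √(ab) ψ(q d) / ψ((q - 1) d)` with `ψ x = sinh x / x`. The second derivative of
`log ψ` is `1 / x ^ 2 - 1 / sinh x ^ 2 > 0`, so `log ψ` is strictly convex on `(0, ∞)` and its
increments over intervals of the fixed length `d` increase with the position of the interval.
-/

open Real Set

theorem strictConvexOn_log_sinh_sub_log :
    StrictConvexOn ℝ (Ioi 0) fun x => log (sinh x) - log x := by
  have hderiv : ∀ x ∈ Ioi (0 : ℝ),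
      HasDerivAt (fun x => log (sinh x) - log x) (cosh x / sinh x - x⁻¹) x := fun x hx =>
    ((hasDerivAt_sinh x).log (sinh_pos_iff.2 hx).ne').sub (hasDerivAt_log (ne_of_gt hx))
  have hderiv2 : ∀ x ∈ Ioi (0 : ℝ), HasDerivAt (fun x => cosh x / sinh x - x⁻¹)
      ((sinh x * sinh x - cosh x * cosh x) / sinh x ^ 2 - -(x ^ 2)⁻¹) x := fun x hx =>
    ((hasDerivAt_cosh x).div (hasDerivAt_sinh x) (sinh_pos_iff.2 hx).ne').sub
      (hasDerivAt_inv (ne_of_gt hx))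
  refine StrictMonoOn.strictConvexOn_of_deriv (convex_Ioi 0)
    (fun x hx => (hderiv x hx).continuousAt.continuousWithinAt) ?_
  rw [interior_Ioi]
  refine StrictMonoOn.congr ?_ fun x hx => (hderiv x hx).deriv.symm
  refine strictMonoOn_of_deriv_pos (convex_Ioi 0)
    (fun x hx => (hderiv2 x hx).continuousAt.continuousWithinAt) fun x hx => ?_
  rw [interior_Ioi] at hx
  have hsq : x ^ 2 < sinh x ^ 2 := by gcongr; exacts [hx.le, self_lt_sinh_iff.2 hx]
  have hinv : (sinh x ^ 2)⁻¹ < (x ^ 2)⁻¹ := by gcongr; exact pow_pos hx 2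
  rw [(hderiv2 x hx).deriv, ← sq, ← sq, ← neg_sub (cosh x ^ 2), cosh_sq_sub_sinh_sq]
  linarith [neg_div (sinh x ^ 2) 1, one_div (sinh x ^ 2)]

theorem StrictConvexOn.sub_shift_lt_sub_shift {s : Set ℝ} {f : ℝ → ℝ}
    (hf : StrictConvexOn ℝ s f) {x y h : ℝ} (hxh : x - h ∈ s) (hy : y ∈ s) (hh : 0 < h)
    (hxy : x < y) :
    f x - f (x - h) < f y - f (y - h) := by
  have hx : x ∈ s := hf.1.ordConnected.out hxh hy ⟨by linarith, hxy.le⟩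
  have hyh : y - h ∈ s := hf.1.ordConnected.out hxh hy ⟨by linarith, by linarith⟩
  have h₁ := hf.secant_strict_mono hxh hx hy (by linarith) (by linarith) hxy
  have h₂ := hf.secant_strict_mono hy hxh hyh (by linarith) (by linarith) (by linarith)
  rw [sub_sub_cancel] at h₁
  rw [← neg_sub (f y), ← neg_sub y, neg_div_neg_eq, sub_sub_cancel_left, ← neg_sub (f y),
    neg_div_neg_eq] at h₂
  exact (div_lt_div_iff_of_pos_right hh).1 (h₁.trans h₂)

theorem sinh_div_self_div_lt {x y h : ℝ} (hh : 0 < h) (hxh : h < x) (hxy : x < y) :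
    sinh x / x / (sinh (x - h) / (x - h)) < sinh y / y / (sinh (y - h) / (y - h)) := by
  have hψ : ∀ z, 0 < z → 0 < sinh z / z := fun z hz => div_pos (sinh_pos_iff.2 hz) hz
  have hlog : ∀ z, 0 < z → log (sinh z / z) = log (sinh z) - log z := fun z hz =>
    log_div (sinh_pos_iff.2 hz).ne' hz.ne'
  have hx : 0 < x := hh.trans hxh
  have hy : 0 < y := hx.trans hxy
  have hxh₀ : 0 < x - h := sub_pos.2 hxh
  have hyh₀ : 0 < y - h := by linarith
  rw [← log_lt_log_iff (div_pos (hψ x hx) (hψ _ hxh₀)) (div_pos (hψ y hy) (hψ _ hyh₀)),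
    log_div (hψ x hx).ne' (hψ _ hxh₀).ne', log_div (hψ y hy).ne' (hψ _ hyh₀).ne',
    hlog x hx, hlog _ hxh₀, hlog y hy, hlog _ hyh₀]
  exact strictConvexOn_log_sinh_sub_log.sub_shift_lt_sub_shift hxh₀ hy hh hxy

noncomputable def qMean (q a b : ℝ) : ℝ :=
  (q - 1) / q * (a ^ q - b ^ q) / (a ^ (q - 1) - b ^ (q - 1))

theorem qMean_comm (q a b : ℝ) : qMean q a b = qMean q b a := by
  rw [qMean, qMean, ← neg_sub (b ^ q), ← neg_sub (b ^ (q - 1)), mul_neg, neg_div_neg_eq]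

theorem rpow_sub_rpow_eq_two_mul_exp_mul_sinh {a b : ℝ} (ha : 0 < a) (hb : 0 < b) (q : ℝ) :
    a ^ q - b ^ q =
      2 * exp (q * ((log a + log b) / 2)) * sinh (q * ((log a - log b) / 2)) := by
  rw [rpow_def_of_pos ha, rpow_def_of_pos hb, sinh_eq,
    show log a * q = q * ((log a + log b) / 2) + q * ((log a - log b) / 2) by ring,
    show log b * q = q * ((log a + log b) / 2) + -(q * ((log a - log b) / 2)) by ring,
    exp_add, exp_add]
  ring

theorem qMean_eq_exp_mul_sinh_div_self {a b q : ℝ} (ha : 0 < a) (hb : 0 < b) (hab : a ≠ b)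
    (hq : 1 < q) :
    qMean q a b = exp ((log a + log b) / 2) *
      (sinh (q * ((log a - log b) / 2)) / (q * ((log a - log b) / 2)) /
        (sinh ((q - 1) * ((log a - log b) / 2)) / ((q - 1) * ((log a - log b) / 2)))) := by
  have hd : (log a - log b) / 2 ≠ 0 := fun h => hab (log_injOn_pos ha hb (by linarith))
  have hexp : exp (q * ((log a + log b) / 2)) =
      exp ((log a + log b) / 2) * exp ((q - 1) * ((log a + log b) / 2)) := by
    rw [← exp_add]; ring_nf
  rw [qMean, rpow_sub_rpow_eq_two_mul_exp_mul_sinh ha hb,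
    rpow_sub_rpow_eq_two_mul_exp_mul_sinh ha hb, hexp]
  generalize (log a - log b) / 2 = d at hd ⊢
  have hq0 : q ≠ 0 := by positivity
  have hq1 : q - 1 ≠ 0 := by linarith
  have hs : sinh ((q - 1) * d) ≠ 0 := sinh_ne_zero.2 (mul_ne_zero hq1 hd)
  field_simp

theorem qMean_lt_qMean {a b q₁ q₂ : ℝ} (hb : 0 < b) (hba : b < a) (hq₁ : 1 < q₁)
    (hq₁₂ : q₁ < q₂) : qMean q₁ a b < qMean q₂ a b := by
  have ha : 0 < a := hb.trans hba
  have hd : 0 < (log a - log b) / 2 := by linarith [log_lt_log hb hba]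
  rw [qMean_eq_exp_mul_sinh_div_self ha hb hba.ne' hq₁,
    qMean_eq_exp_mul_sinh_div_self ha hb hba.ne' (hq₁.trans hq₁₂), sub_one_mul, sub_one_mul]
  exact mul_lt_mul_of_pos_left (sinh_div_self_div_lt hd (lt_mul_of_one_lt_left hd hq₁)
    (mul_lt_mul_of_pos_right hq₁₂ hd)) (exp_pos _)

/-- **Strict monotonicity of the `q`-mean in `q`.**
For distinct positive reals `a ≠ b` and `1 < q₁ < q₂`,
`θ_{q₁}(a,b) < θ_{q₂}(a,b)`, where
`θ_q(a,b) := ((q−1)/q) (a^q − b^q)/(a^{q−1} − b^{q−1})`. -/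
theorem qMean_strictMono (a b q₁ q₂ : ℝ) (ha : 0 < a) (hb : 0 < b) (hab : a ≠ b)
    (hq₁ : 1 < q₁) (hq₁₂ : q₁ < q₂) :
    (q₁ - 1)/q₁ * (a ^ q₁ - b ^ q₁) / (a ^ (q₁ - 1) - b ^ (q₁ - 1)) <
      (q₂ - 1)/q₂ * (a ^ q₂ - b ^ q₂) / (a ^ (q₂ - 1) - b ^ (q₂ - 1)) := by
  change qMean q₁ a b < qMean q₂ a b
  rcases hab.lt_or_gt with hab | hba
  · rw [qMean_comm q₁, qMean_comm q₂]
    exact qMean_lt_qMean ha hab hq₁ hq₁₂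
  · exact qMean_lt_qMean hb hba hq₁ hq₁₂
end

section
/- Comparison of the q-mean with the arithmetic mean: for every q > 1 and all a, b > 0 with a ≠ b, | (a+b)/2 − θ_q(a,b) | ≤ (|q−2|/q) · |a−b|/2, where θ_q(a,b) := ((q−1)/q) (a^q − b^q)/(a^{q−1} − b^{q−1}). -/
/-!
Put `A = a^(q-1)`, `B = b^(q-1)`. Clearing the denominator `2q(A - B)`, the claim becomes
`|q(a+b)(A-B) - 2(q-1)(aA - bB)| ≤ |q-2|(a-b)(A-B)`, and each of the two one-sided bounds is,
after rearranging, Bernoulli's inequality for `t ↦ t^(q-1)` at the ratio of `a` and `b`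
(convex for `q ≥ 2`, concave for `q ≤ 2`).
-/

namespace Real

variable {p x y : ℝ}

/-- Bernoulli's inequality `1 + p s ≤ (1 + s)^p`, made homogeneous: `x^p + p x^(p-1) (y-x) ≤ y^p`,
multiplied through by `x`. -/
theorem rpow_mul_add_mul_sub_le_mul_rpow (hp : 1 ≤ p) (hx : 0 < x) (hy : 0 ≤ y) :
    x ^ p * (x + p * (y - x)) ≤ x * y ^ p := by
  have h := one_add_mul_self_le_rpow_one_add (s := y / x - 1) (by linarith [div_nonneg hy hx.le]) hp
  rw [add_sub_cancel, div_rpow hy hx.le] at h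
  have hxp : 0 < x ^ p := rpow_pos_of_pos hx p
  calc x ^ p * (x + p * (y - x)) = x * x ^ p * (1 + p * (y / x - 1)) := by field_simp
    _ ≤ x * x ^ p * (y ^ p / x ^ p) := by gcongr
    _ = x * y ^ p := by field_simp

theorem mul_rpow_le_rpow_mul_add_mul_sub (hp₀ : 0 ≤ p) (hp₁ : p ≤ 1) (hx : 0 < x) (hy : 0 ≤ y) :
    x * y ^ p ≤ x ^ p * (x + p * (y - x)) := by
  have h := rpow_one_add_le_one_add_mul_self (s := y / x - 1) (by linarith [div_nonneg hy hx.le]) hp₀ hp₁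
  rw [add_sub_cancel, div_rpow hy hx.le] at h
  have hxp : 0 < x ^ p := rpow_pos_of_pos hx p
  calc x * y ^ p = x * x ^ p * (y ^ p / x ^ p) := by field_simp
    _ ≤ x * x ^ p * (1 + p * (y / x - 1)) := by gcongr
    _ = x ^ p * (x + p * (y - x)) := by field_simp

theorem sub_mul_rpow_sub_rpow_pos (hp : 0 < p) (hx : 0 ≤ x) (hy : 0 ≤ y) (hxy : x ≠ y) :
    0 < (x - y) * (x ^ p - y ^ p) := by
  rcases hxy.lt_or_gt with h | h
  · exact mul_pos_of_neg_of_neg (sub_neg.2 h) (sub_neg.2 (rpow_lt_rpow hx h hp))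
  · exact mul_pos (sub_pos.2 h) (sub_pos.2 (rpow_lt_rpow hy h hp))

end Real

open Real

theorem qMean_numerator_le {q a b : ℝ} (hq : 1 < q) (ha : 0 < a) (hb : 0 < b) :
    q * (a + b) * (a ^ (q - 1) - b ^ (q - 1)) - 2 * (q - 1) * (a ^ q - b ^ q) ≤
      |q - 2| * ((a - b) * (a ^ (q - 1) - b ^ (q - 1))) := by
  have haq : a ^ q = a * a ^ (q - 1) := by rw [rpow_sub_one ha.ne']; field_simp
  have hbq : b ^ q = b * b ^ (q - 1) := by rw [rpow_sub_one hb.ne']; field_simp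
  rw [haq, hbq]
  rcases le_total 2 q with h2 | h2
  · have h := rpow_mul_add_mul_sub_le_mul_rpow (p := q - 1) (by linarith) ha hb.le
    rw [abs_of_nonneg (by linarith)]
    linarith
  · have h := mul_rpow_le_rpow_mul_add_mul_sub (p := q - 1) (by linarith) (by linarith) hb ha.le
    rw [abs_of_nonpos (by linarith)]
    linarith

theorem abs_qMean_numerator_le {q a b : ℝ} (hq : 1 < q) (ha : 0 < a) (hb : 0 < b) :
    |q * (a + b) * (a ^ (q - 1) - b ^ (q - 1)) - 2 * (q - 1) * (a ^ q - b ^ q)| ≤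
      |q - 2| * ((a - b) * (a ^ (q - 1) - b ^ (q - 1))) := by
  refine abs_le.2 ⟨?_, qMean_numerator_le hq ha hb⟩
  have := qMean_numerator_le hq hb ha
  linarith

/-- **Comparison of the `q`-mean with the arithmetic mean.**
For `q > 1` and distinct positive reals `a ≠ b`,
`|(a+b)/2 − θ_q(a,b)| ≤ (|q−2|/q) |a−b|/2`, where
`θ_q(a,b) := ((q−1)/q) (a^q − b^q)/(a^{q−1} − b^{q−1})`. -/
theorem qMean_arith_mean_comparison (q a b : ℝ) (hq : 1 < q) (ha : 0 < a) (hb : 0 < b)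
    (hab : a ≠ b) :
    |(a + b)/2 - (q - 1)/q * (a ^ q - b ^ q) / (a ^ (q - 1) - b ^ (q - 1))| ≤
      |q - 2|/q * (|a - b|/2) := by
  have hpos := sub_mul_rpow_sub_rpow_pos (by linarith : 0 < q - 1) ha.le hb.le hab
  have hD : a ^ (q - 1) - b ^ (q - 1) ≠ 0 := right_ne_zero_of_mul hpos.ne'
  calc |(a + b)/2 - (q - 1)/q * (a ^ q - b ^ q) / (a ^ (q - 1) - b ^ (q - 1))|
      = |q * (a + b) * (a ^ (q - 1) - b ^ (q - 1)) - 2 * (q - 1) * (a ^ q - b ^ q)| /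
          (2 * q * |a ^ (q - 1) - b ^ (q - 1)|) := by
        rw [← abs_of_pos (by positivity : 0 < 2 * q), ← abs_mul, ← abs_div]
        congr 1
        field_simp
    _ ≤ |q - 2| * ((a - b) * (a ^ (q - 1) - b ^ (q - 1))) /
          (2 * q * |a ^ (q - 1) - b ^ (q - 1)|) := by
        gcongr
        exact abs_qMean_numerator_le hq ha hb
    _ = |q - 2|/q * (|a - b|/2) := by
        rw [← abs_of_pos hpos, abs_mul]
        field_simp
end

section
/- Quantified convexity inequality for power functions: for every q̄ ∈ (1,2] and all a, b > 0, q̄ · a^{q̄−1} (a−b) ≥ a^{q̄} − b^{q̄} + (q̄ (q̄−1)/2^{3−q̄}) · ((a+b)/2)^{q̄−2} (a−b)². -/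
open intervalIntegral Set MeasureTheory

/-- The auxiliary comparison function `u t = q t^{q-1} - q(q-1) s^{q-2} t`
is monotone on `[m, s]` when `0 < m`, `1 < q ≤ 2`. -/
lemma pow_conv_aux_mono (q s m : ℝ) (hq1 : 1 < q) (hq2 : q ≤ 2) (hm : 0 < m) (hms : m ≤ s) :
    MonotoneOn (fun t : ℝ => q * t ^ (q - 1) - q * (q - 1) * s ^ (q - 2) * t)
      (Set.Icc m s) := by
  apply monotoneOn_of_deriv_nonneg (convex_Icc m s)
  · apply ContinuousOn.sub
    · exact fun t ht => (ContinuousAt.const_smul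
        (Real.continuousAt_rpow_const t (q - 1) (Or.inl (ne_of_gt (lt_of_lt_of_le hm ht.1)))) q).continuousWithinAt
    · exact (continuous_const.mul continuous_id).continuousOn
  · intro t ht
    rw [interior_Icc] at ht
    have h1 : HasDerivAt (fun t : ℝ => q * t ^ (q - 1) - q * (q - 1) * s ^ (q - 2) * t)
        (q * ((q - 1) * t ^ (q - 1 - 1)) - q * (q - 1) * s ^ (q - 2) * 1) t :=
      ((Real.hasDerivAt_rpow_const (Or.inl (ne_of_gt (lt_trans hm ht.1)))).const_mul q).sub
        ((hasDerivAt_id t).const_mul _)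
    exact h1.differentiableAt.differentiableWithinAt
  · intro t ht
    rw [interior_Icc] at ht
    have htpos : 0 < t := lt_trans hm ht.1
    have h1 : HasDerivAt (fun t : ℝ => q * t ^ (q - 1) - q * (q - 1) * s ^ (q - 2) * t)
        (q * ((q - 1) * t ^ (q - 1 - 1)) - q * (q - 1) * s ^ (q - 2) * 1) t :=
      ((Real.hasDerivAt_rpow_const (Or.inl (ne_of_gt htpos))).const_mul q).sub
        ((hasDerivAt_id t).const_mul _)
    rw [h1.deriv]
    have h2 : s ^ (q - 2) ≤ t ^ (q - 2) :=
      Real.rpow_le_rpow_of_nonpos htpos ht.2.le (by linarith)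
    have h3 : q - 1 - 1 = q - 2 := by ring
    rw [h3]
    have h5 := mul_le_mul_of_nonneg_left h2 (show (0:ℝ) ≤ q * (q - 1) by nlinarith)
    nlinarith [h5]

/-- Key second-order Taylor-type inequality. -/
lemma pow_conv_key (q a b : ℝ) (hq1 : 1 < q) (hq2 : q ≤ 2) (ha : 0 < a) (hb : 0 < b) :
    b ^ q - a ^ q - q * a ^ (q - 1) * (b - a) ≥
      q * (q - 1) / 2 * (a + b) ^ (q - 2) * (b - a) ^ 2 := by
  set s := a + b with hs
  set c := q * (q - 1) * s ^ (q - 2) with hc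
  set u := fun t : ℝ => q * t ^ (q - 1) - c * t with hu
  have hmono : MonotoneOn u (Set.Icc (min a b) s) :=
    pow_conv_aux_mono q s (min a b) hq1 hq2 (lt_min ha hb)
      (le_trans (min_le_left a b) (by linarith))
  have hamem : a ∈ Set.Icc (min a b) s := ⟨min_le_left a b, by linarith⟩
  -- integrability
  have hi1 : IntervalIntegrable (fun t : ℝ => t ^ (q - 1)) volume a b :=
    intervalIntegrable_rpow (Or.inl (by linarith))
  have hi2 : IntervalIntegrable (fun t : ℝ => q * t ^ (q - 1)) volume a b :=
    hi1.const_mul q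
  have hi3 : IntervalIntegrable (fun t : ℝ => c * t) volume a b :=
    (intervalIntegrable_id).const_mul c
  have hi4 : IntervalIntegrable u volume a b := hi2.sub hi3
  -- value of the integral
  have hq0 : q ≠ 0 := by linarith
  have hval : (∫ t in a..b, (u t - u a)) =
      (b ^ q - a ^ q) - c * (b ^ 2 - a ^ 2) / 2 - u a * (b - a) := by
    rw [intervalIntegral.integral_sub hi4 intervalIntegrable_const,
      intervalIntegral.integral_const, intervalIntegral.integral_sub hi2 hi3,
      intervalIntegral.integral_const_mul, intervalIntegral.integral_const_mul,
      integral_id, integral_rpow (Or.inl (by linarith : (-1:ℝ) < q - 1))]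
    have : q - 1 + 1 = q := by ring
    rw [this]
    field_simp
    ring
  -- nonnegativity of the integral
  have hnonneg : 0 ≤ ∫ t in a..b, (u t - u a) := by
    rcases le_total a b with hab | hab
    · apply intervalIntegral.integral_nonneg hab
      intro t ht
      have htmem : t ∈ Set.Icc (min a b) s :=
        ⟨le_trans (min_le_left a b) ht.1, by linarith [ht.2]⟩
      have := hmono hamem htmem ht.1
      linarith
    · have h7 : 0 ≤ ∫ t in b..a, (u a - u t) := by
        apply intervalIntegral.integral_nonneg hab
        intro t ht
        have htmem : t ∈ Set.Icc (min a b) s :=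
          ⟨le_trans (min_le_right a b) ht.1, le_trans ht.2 (by linarith)⟩
        have := hmono htmem hamem ht.2
        linarith
      have h8 : (∫ t in b..a, (u a - u t)) = ∫ t in a..b, (u t - u a) := by
        rw [intervalIntegral.integral_symm b a, ← intervalIntegral.integral_neg]
        simp only [neg_sub]
      linarith [h7, h8.symm ▸ h7]
  have hfinal : 0 ≤ (b ^ q - a ^ q) - c * (b ^ 2 - a ^ 2) / 2 - u a * (b - a) := by
    rw [← hval]; exact hnonneg
  have hua : u a = q * a ^ (q - 1) - c * a := rfl
  rw [hua] at hfinal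
  have : q * (q - 1) / 2 * (a + b) ^ (q - 2) * (b - a) ^ 2 = c * (b - a) ^ 2 / 2 := by
    rw [hc, hs]; ring
  rw [ge_iff_le, this]
  nlinarith [hfinal]

/-- **Quantified convexity inequality for power functions.**
For `q̄ ∈ (1,2]` and positive reals `a, b`,
`q̄ a^{q̄−1}(a−b) ≥ a^{q̄} − b^{q̄} + (q̄(q̄−1)/2^{3−q̄}) ((a+b)/2)^{q̄−2} (a−b)²`. -/
theorem pow_convexity_quantified (qb a b : ℝ) (hqb1 : 1 < qb) (hqb2 : qb ≤ 2)
    (ha : 0 < a) (hb : 0 < b) :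
    qb * a ^ (qb - 1) * (a - b) ≥
      a ^ qb - b ^ qb +
        qb * (qb - 1) / (2:ℝ) ^ (3 - qb) * ((a + b)/2) ^ (qb - 2) * (a - b)^2 := by
  have key := pow_conv_key qb a b hqb1 hqb2 ha hb
  have hcoef : qb * (qb - 1) / (2:ℝ) ^ (3 - qb) * ((a + b)/2) ^ (qb - 2) =
      qb * (qb - 1) / 2 * (a + b) ^ (qb - 2) := by
    have h1 : ((a + b)/2 : ℝ) ^ (qb - 2) = (a + b) ^ (qb - 2) / (2:ℝ) ^ (qb - 2) :=
      Real.div_rpow (by positivity) (by norm_num) _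
    have h2 : (2:ℝ) ^ (3 - qb) * (2:ℝ) ^ (qb - 2) = 2 := by
      rw [← Real.rpow_add (by norm_num)]
      norm_num
    have h3 : (0:ℝ) < (2:ℝ) ^ (3 - qb) := Real.rpow_pos_of_pos (by norm_num) _
    have h4 : (0:ℝ) < (2:ℝ) ^ (qb - 2) := Real.rpow_pos_of_pos (by norm_num) _
    rw [h1, div_mul_div_comm, h2]
    ring
  rw [hcoef]
  have hsq : (a - b) ^ 2 = (b - a) ^ 2 := by ring
  rw [hsq]
  linarith [key]
end

section
/- Elementary power-difference inequality: for every q̄ ∈ (1,2] and all a, b > 0, (a−b)² ((a+b)/2)^{q̄−2} ≤ (a−b)(a^{q̄−1} − b^{q̄−1})/(q̄−1). -/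
/-!
The right-hand side equals `(a - b) * ∫_b^a x ^ (q̄ - 2) dx`, and `x ↦ x ^ (q̄ - 2)` is convex on
`(0, ∞)` because `q̄ - 2 ≤ 0`. The midpoint half of the Hermite–Hadamard inequality bounds this
integral below by `(a - b) * ((a + b) / 2) ^ (q̄ - 2)`; it follows by averaging the convexity
inequality at `x` and at its reflection `a + b - x`.
-/

open Real Set MeasureTheory

theorem convexOn_rpow_of_nonpos {p : ℝ} (hp : p ≤ 0) :
    ConvexOn ℝ (Ioi 0) fun x : ℝ ↦ x ^ p := by
  have hlog : ConvexOn ℝ (Ioi 0) fun x ↦ p * log x := by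
    refine (neg_convexOn_iff.2 (strictConcaveOn_log_Ioi.concaveOn.smul (neg_nonneg.2 hp))).congr
      fun x _ ↦ ?_
    simp
  refine ⟨convex_Ioi 0, fun x hx y hy s t hs ht hst ↦ ?_⟩
  have hxy : 0 < s • x + t • y := (convex_Ioi 0) hx hy hs ht hst
  simp only [rpow_def_of_pos hxy, rpow_def_of_pos (mem_Ioi.1 hx), rpow_def_of_pos (mem_Ioi.1 hy),
    mul_comm _ p]
  calc exp (p * log (s • x + t • y)) ≤ exp (s • (p * log x) + t • (p * log y)) :=
        exp_le_exp.2 (hlog.2 hx hy hs ht hst)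
    _ ≤ s • exp (p * log x) + t • exp (p * log y) :=
        convexOn_exp.2 trivial trivial hs ht hst

theorem ConvexOn.sub_mul_le_intervalIntegral {f : ℝ → ℝ} {a b : ℝ} (hab : a ≤ b)
    (hf : ConvexOn ℝ (Icc a b) f) (hint : IntervalIntegrable f volume a b) :
    (b - a) * f ((a + b) / 2) ≤ ∫ x in a..b, f x := by
  have hreflect : ∫ x in a..b, f (a + b - x) = ∫ x in a..b, f x := by
    simp [intervalIntegral.integral_comp_sub_left]
  have hint' : IntervalIntegrable (fun x ↦ f (a + b - x)) volume a b := by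
    simpa using (hint.comp_sub_left (a + b)).symm
  have hmid : ∀ x ∈ Icc a b, 2 * f ((a + b) / 2) ≤ f x + f (a + b - x) := by
    intro x hx
    have hx' : a + b - x ∈ Icc a b := ⟨by linarith [hx.2], by linarith [hx.1]⟩
    have h := hf.2 hx hx' (by norm_num : (0 : ℝ) ≤ 1 / 2)
      (by norm_num : (0 : ℝ) ≤ 1 / 2) (by norm_num)
    rw [show (1 / 2 : ℝ) • x + (1 / 2 : ℝ) • (a + b - x) = (a + b) / 2 by
        simp only [smul_eq_mul]; ring,
      smul_eq_mul, smul_eq_mul] at h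
    linarith
  have := intervalIntegral.integral_mono_on hab intervalIntegrable_const (hint.add hint') hmid
  rw [intervalIntegral.integral_const, intervalIntegral.integral_add hint hint', hreflect,
    smul_eq_mul] at this
  linarith

theorem sub_mul_midpoint_rpow_le {p a b : ℝ} (hp0 : 0 < p) (hp1 : p ≤ 1) (hb : 0 < b)
    (hab : b ≤ a) : (a - b) * ((a + b) / 2) ^ (p - 1) ≤ (a ^ p - b ^ p) / p := by
  have hconv : ConvexOn ℝ (Icc b a) fun x : ℝ ↦ x ^ (p - 1) :=
    (convexOn_rpow_of_nonpos (by linarith)).subset (fun x hx ↦ hb.trans_le hx.1) (convex_Icc b a)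
  have hintegral := integral_rpow (a := b) (b := a) (r := p - 1) (Or.inl (by linarith))
  rw [sub_add_cancel] at hintegral
  rw [← hintegral, add_comm a b]
  exact hconv.sub_mul_le_intervalIntegral hab
    (intervalIntegral.intervalIntegrable_rpow' (by linarith))

/-- **Elementary power-difference inequality.**
For `q̄ ∈ (1,2]` and positive reals `a, b`,
`(a−b)² ((a+b)/2)^{q̄−2} ≤ (a−b)(a^{q̄−1} − b^{q̄−1})/(q̄−1)`. -/
theorem pow_difference_inequality (qb a b : ℝ) (hqb1 : 1 < qb) (hqb2 : qb ≤ 2)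
    (ha : 0 < a) (hb : 0 < b) :
    (a - b)^2 * ((a + b)/2) ^ (qb - 2) ≤
      (a - b) * (a ^ (qb - 1) - b ^ (qb - 1)) / (qb - 1) := by
  wlog hab : b ≤ a generalizing a b
  · have h := this b a hb ha (le_of_not_ge hab)
    rw [add_comm b a] at h
    calc (a - b) ^ 2 * ((a + b) / 2) ^ (qb - 2) = (b - a) ^ 2 * ((a + b) / 2) ^ (qb - 2) := by ring
      _ ≤ (b - a) * (b ^ (qb - 1) - a ^ (qb - 1)) / (qb - 1) := h
      _ = (a - b) * (a ^ (qb - 1) - b ^ (qb - 1)) / (qb - 1) := by ring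
  have key := sub_mul_midpoint_rpow_le (p := qb - 1) (by linarith) (by linarith) hb hab
  rw [show qb - 1 - 1 = qb - 2 by ring] at key
  calc (a - b) ^ 2 * ((a + b) / 2) ^ (qb - 2) = (a - b) * ((a - b) * ((a + b) / 2) ^ (qb - 2)) := by
        ring
    _ ≤ (a - b) * ((a ^ (qb - 1) - b ^ (qb - 1)) / (qb - 1)) :=
        mul_le_mul_of_nonneg_left key (sub_nonneg.2 hab)
    _ = (a - b) * (a ^ (qb - 1) - b ^ (qb - 1)) / (qb - 1) := (mul_div_assoc ..).symm
end
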